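/- arXiv:1305.7170 — 2 statements merged into one kernel-verified Lean document; each statement's English description precedes it below -/
import Mathlib

section
/- Let φ : ℝ^m → (−∞, +∞] be proper (φ ≢ +∞), convex and lower semicontinuous. Then the graph G := { (y, y*) ∈ ℝ^m × ℝ^m : y* ∈ ∂φ(y) } of the subdifferential operator ∂φ is maximal monotone: G is monotone, and every monotone subset of ℝ^m × ℝ^m containing G equals G. -/
/-!
Minty's argument. For every `z`, the function `y ↦ φ y + ‖y - z‖² / 2` is lower
semicontinuous and coercive (by Hahn–Banach, `φ` has an affine minorant), so it attains its
minimum at some `y₀`; comparing its values along segments issuing from `y₀` shows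
`z - y₀ ∈ ∂φ(y₀)`. Thus every `z` splits as `y + y*` with `(y, y*) ∈ G`. If `(x, x*)` lies in a
monotone `H ⊇ G`, testing it against the splitting `(y, x + x* - y)` of `x + x*` gives
`-‖x - y‖² ≥ 0`, so `(x, x*) = (y, x + x* - y) ∈ G`.
-/

open Set Filter Topology

variable {E : Type*}

section Convexity

variable [AddCommGroup E] [Module ℝ E]

-- `ConvexOn` needs an ordered `ℝ`-module as codomain, which `EReal` is not.
def ERealConvex (φ : E → EReal) : Prop :=
  ∀ x y : E, ∀ a b : ℝ, 0 ≤ a → 0 ≤ b → a + b = 1 →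
    φ (a • x + b • y) ≤ (a : EReal) * φ x + (b : EReal) * φ y

theorem ERealConvex.convex_epigraph {φ : E → EReal} (hφ : ERealConvex φ) :
    Convex ℝ {p : E × ℝ | φ p.1 ≤ p.2} := by
  rintro ⟨y, s⟩ hys ⟨z, t⟩ hzt a b ha hb hab
  calc φ (a • y + b • z) ≤ (a : EReal) * φ y + (b : EReal) * φ z := hφ y z a b ha hb hab
    _ ≤ (a : EReal) * s + (b : EReal) * t := by gcongr <;> assumption
    _ = ((a * s + b * t : ℝ) : EReal) := by norm_cast

end Convexity

theorem LowerSemicontinuous.isClosed_setOf_le_coe {α : Type*} [TopologicalSpace α]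
    {φ : α → EReal} (hφ : LowerSemicontinuous φ) :
    IsClosed {p : α × ℝ | φ p.1 ≤ p.2} :=
  hφ.isClosed_epigraph.preimage
    (continuous_fst.prodMk (continuous_coe_real_ereal.comp continuous_snd))

theorem LowerSemicontinuous.exists_isMinOn_of_isCompact_sublevel {α β : Type*}
    [TopologicalSpace α] [LinearOrder β] {f : α → β} (hf : LowerSemicontinuous f) (x₀ : α)
    (hK : IsCompact {x | f x ≤ f x₀}) : ∃ a, IsMinOn f univ a := by
  obtain ⟨a, -, hmin⟩ :=
    LowerSemicontinuousOn.exists_isMinOn ⟨x₀, le_refl (f x₀)⟩ hK (hf.lowerSemicontinuousOn _)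
  refine ⟨a, fun x _ => ?_⟩
  by_cases hx : f x ≤ f x₀
  · exact isMinOn_iff.1 hmin x hx
  · exact (isMinOn_iff.1 hmin x₀ le_rfl).trans (not_le.1 hx).le

section Normed

variable [NormedAddCommGroup E] [NormedSpace ℝ E]

theorem ERealConvex.exists_affine_le {φ : E → EReal} (hφ : ERealConvex φ)
    (hbot : ∀ y, φ y ≠ ⊥) (hproper : ∃ y, φ y ≠ ⊤) (hlsc : LowerSemicontinuous φ) :
    ∃ (L : StrongDual ℝ E) (b : ℝ), ∀ y, ((L y + b : ℝ) : EReal) ≤ φ y := by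
  obtain ⟨x₀, hx₀⟩ := hproper
  lift φ x₀ to ℝ using ⟨hx₀, hbot x₀⟩ with r hr
  have hnot : (x₀, r - 1) ∉ {p : E × ℝ | φ p.1 ≤ p.2} := by
    change ¬ φ x₀ ≤ ((r - 1 : ℝ) : EReal)
    rw [← hr, EReal.coe_le_coe_iff]
    linarith
  obtain ⟨f, u, hfu, hsep⟩ :=
    geometric_hahn_banach_point_closed hφ.convex_epigraph hlsc.isClosed_setOf_le_coe hnot
  have hsplit : ∀ (y : E) (t : ℝ), f (y, t) = f (y, 0) + t * f (0, 1) := by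
    intro y t
    rw [← smul_eq_mul, ← map_smul, ← map_add, Prod.smul_mk, smul_zero, smul_eq_mul, mul_one,
      Prod.mk_add_mk, add_zero, zero_add]
  have hc : 0 < f (0, 1) := by
    have := hsep (x₀, r) (by simp [← hr])
    rw [hsplit] at this hfu
    linarith
  refine ⟨-(f (0, 1))⁻¹ • f.comp (ContinuousLinearMap.inl ℝ E ℝ), u / f (0, 1), fun y => ?_⟩
  induction hy : φ y using EReal.rec with
  | bot => exact absurd hy (hbot y)
  | top => exact le_top
  | coe t =>
    have := hsep (y, t) (by simp [hy])
    rw [hsplit] at this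
    simp only [smul_apply, ContinuousLinearMap.comp_apply,
      ContinuousLinearMap.inl_apply, smul_eq_mul, EReal.coe_le_coe_iff]
    rw [neg_mul, ← div_eq_inv_mul, neg_add_eq_sub, ← sub_div, div_le_iff₀ hc]
    linarith

theorem isBounded_setOf_affine_add_half_sq_norm_sub_le (L : StrongDual ℝ E) (b c : ℝ)
    (z : E) :
    Bornology.IsBounded {y | L y + b + ‖y - z‖ ^ 2 / 2 ≤ c} := by
  rw [Metric.isBounded_iff_subset_closedBall z]
  refine ⟨1 + 2 * |c - b - L z| + 2 * ‖L‖, fun y hy => ?_⟩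
  rw [Metric.mem_closedBall, dist_eq_norm]
  have hL : -(‖L‖ * ‖y - z‖) ≤ L (y - z) := by
    have := L.le_opNorm (y - z)
    rw [Real.norm_eq_abs] at this
    linarith [neg_abs_le (L (y - z))]
  rw [map_sub] at hL
  have hy' : L y + b + ‖y - z‖ ^ 2 / 2 ≤ c := hy
  have hA := le_abs_self (c - b - L z)
  nlinarith [norm_nonneg (y - z), norm_nonneg L, abs_nonneg (c - b - L z)]

theorem ERealConvex.exists_isMinOn_add_half_sq_norm_sub [ProperSpace E] {φ : E → EReal}
    (hφ : ERealConvex φ) (hbot : ∀ y, φ y ≠ ⊥) (hproper : ∃ y, φ y ≠ ⊤)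
    (hlsc : LowerSemicontinuous φ) (z : E) :
    ∃ y₀, IsMinOn (fun y => φ y + ((‖y - z‖ ^ 2 / 2 : ℝ) : EReal)) univ y₀ := by
  set ψ := fun y => φ y + ((‖y - z‖ ^ 2 / 2 : ℝ) : EReal)
  have hψ : LowerSemicontinuous ψ := by
    refine hlsc.add' (continuous_coe_real_ereal.comp (by fun_prop)).lowerSemicontinuous
      fun y => EReal.continuousAt_add (.inr (EReal.coe_ne_bot _)) (.inr (EReal.coe_ne_top _))
  obtain ⟨L, b, hLb⟩ := hφ.exists_affine_le hbot hproper hlsc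
  obtain ⟨x₀, hx₀⟩ := hproper
  lift φ x₀ to ℝ using ⟨hx₀, hbot x₀⟩ with r hr
  have hsub : {y | ψ y ≤ ψ x₀} ⊆ {y | L y + b + ‖y - z‖ ^ 2 / 2 ≤ r + ‖x₀ - z‖ ^ 2 / 2} := by
    intro y hy
    rw [mem_ofPred_eq, ← EReal.coe_le_coe_iff]
    calc ((L y + b + ‖y - z‖ ^ 2 / 2 : ℝ) : EReal)
        = ((L y + b : ℝ) : EReal) + ((‖y - z‖ ^ 2 / 2 : ℝ) : EReal) := by norm_cast
      _ ≤ ψ y := add_le_add_left (hLb y) _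
      _ ≤ ψ x₀ := hy
      _ = ((r + ‖x₀ - z‖ ^ 2 / 2 : ℝ) : EReal) := by simp only [ψ, ← hr]; norm_cast
  exact hψ.exists_isMinOn_of_isCompact_sublevel x₀ <|
    Metric.isCompact_of_isClosed_isBounded (hψ.isClosed_preimage _)
      ((isBounded_setOf_affine_add_half_sq_norm_sub_le L b _ z).subset hsub)

end Normed

section InnerProduct

variable [NormedAddCommGroup E] [InnerProductSpace ℝ E]

open RealInnerProductSpace

def IsSubgradient (φ : E → EReal) (y ys : E) : Prop :=
  ∀ v, ((⟪ys, v - y⟫ : ℝ) : EReal) + φ y ≤ φ v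

def IsMonotoneSet (H : Set (E × E)) : Prop :=
  ∀ p ∈ H, ∀ q ∈ H, (0 : ℝ) ≤ ⟪p.2 - q.2, p.1 - q.1⟫

theorem IsSubgradient.ne_top {φ : E → EReal} {y ys : E} (h : IsSubgradient φ y ys)
    (hproper : ∃ v, φ v ≠ ⊤) : φ y ≠ ⊤ := by
  obtain ⟨v, hv⟩ := hproper
  intro hy
  have := h v
  rw [hy, EReal.coe_add_top, top_le_iff] at this
  exact hv this

theorem isMonotoneSet_setOf_isSubgradient {φ : E → EReal} (hbot : ∀ y, φ y ≠ ⊥)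
    (hproper : ∃ y, φ y ≠ ⊤) : IsMonotoneSet {p : E × E | IsSubgradient φ p.1 p.2} := by
  rintro ⟨y, ys⟩ hy ⟨z, zs⟩ hz
  lift φ y to ℝ using ⟨hy.ne_top hproper, hbot y⟩ with r hr
  lift φ z to ℝ using ⟨hz.ne_top hproper, hbot z⟩ with s hs
  have h₁ := hy z
  have h₂ := hz y
  rw [← hr, ← hs] at h₁ h₂
  norm_cast at h₁ h₂
  simp only [inner_sub_right, real_inner_comm y, real_inner_comm z] at h₁ h₂ ⊢
  linarith

theorem ERealConvex.isSubgradient_sub_of_isMinOn {φ : E → EReal} (hφ : ERealConvex φ)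
    {z y₀ : E} (hmin : IsMinOn (fun y => φ y + ((‖y - z‖ ^ 2 / 2 : ℝ) : EReal)) univ y₀) :
    IsSubgradient φ y₀ (z - y₀) := by
  intro v
  have hv := isMinOn_iff.1 hmin v trivial
  induction hr : φ y₀ using EReal.rec with
  | bot => simp
  | top =>
    rw [hr, EReal.top_add_coe, top_le_iff] at hv
    have hvtop : φ v = ⊤ := by
      by_contra h
      exact EReal.add_ne_top h (EReal.coe_ne_top _) hv
    simp [hvtop]
  | coe r =>
  induction hs : φ v using EReal.rec with
  | bot => simp [hr, hs, ← EReal.coe_add] at hv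
  | top => exact le_top
  | coe s =>
  set u := v - y₀
  have key : ∀ t ∈ Ioo (0 : ℝ) 1, ⟪z - y₀, u⟫ + r ≤ s + t * (‖u‖ ^ 2 / 2) := by
    rintro t ⟨ht₀, ht₁⟩
    have hconv : φ (y₀ + t • u) ≤ ((t * s + (1 - t) * r : ℝ) : EReal) := by
      have := hφ v y₀ t (1 - t) ht₀.le (by linarith) (by ring)
      have hseg : t • v + (1 - t) • y₀ = y₀ + t • u := by
        simp only [u, smul_sub, sub_smul, one_smul]; abel
      rwa [hseg, hs, hr, ← EReal.coe_mul, ← EReal.coe_mul, ← EReal.coe_add] at this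
    have hcomp : r + ‖y₀ - z‖ ^ 2 / 2 ≤ t * s + (1 - t) * r + ‖y₀ + t • u - z‖ ^ 2 / 2 := by
      have := (isMinOn_iff.1 hmin (y₀ + t • u) trivial).trans (add_le_add_left hconv _)
      rw [hr] at this
      exact_mod_cast this
    have hexpand :
        ‖y₀ + t • u - z‖ ^ 2 = ‖y₀ - z‖ ^ 2 + 2 * t * ⟪y₀ - z, u⟫ + t ^ 2 * ‖u‖ ^ 2 := by
      rw [add_sub_right_comm, norm_add_sq_real, inner_smul_right, norm_smul, mul_pow,
        Real.norm_eq_abs, sq_abs]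
      ring
    have : t * (⟪z - y₀, u⟫ + r) ≤ t * (s + t * (‖u‖ ^ 2 / 2)) := by
      rw [← neg_sub y₀ z, inner_neg_left]
      nlinarith
    exact le_of_mul_le_mul_left this ht₀
  have hlim : Tendsto (fun t : ℝ => s + t * (‖u‖ ^ 2 / 2)) (𝓝[>] 0) (𝓝 s) := by
    refine tendsto_nhdsWithin_of_tendsto_nhds ?_
    simpa using ((continuous_mul_const (‖u‖ ^ 2 / 2)).tendsto 0).const_add s
  exact_mod_cast ge_of_tendsto hlim (eventually_of_mem (Ioo_mem_nhdsGT one_pos) key)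

theorem IsMonotoneSet.subset_of_forall_exists_sub_mem {G H : Set (E × E)}
    (hH : IsMonotoneSet H) (hGH : G ⊆ H) (hG : ∀ z, ∃ y, (y, z - y) ∈ G) : H ⊆ G := by
  rintro ⟨x, xs⟩ hx
  obtain ⟨y, hy⟩ := hG (x + xs)
  have hxy : x = y := by
    have := hH _ hx _ (hGH hy)
    rw [show xs - (x + xs - y) = -(x - y) by abel, inner_neg_left,
      real_inner_self_eq_norm_sq] at this
    simpa [sub_eq_zero] using this
  subst hxy
  simpa using hy

end InnerProduct

/-- For a proper, convex, lsc `φ : ℝ^m → (−∞,+∞]`, the graph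
`G = {(y, y*) : y* ∈ ∂φ(y)}` of the subdifferential operator is maximal monotone:
`G` is monotone and every monotone subset of `ℝ^m × ℝ^m` containing `G` equals `G`. -/
theorem stmt_12 (m : ℕ) (φ : EuclideanSpace ℝ (Fin m) → EReal)
    (hbot : ∀ y, φ y ≠ ⊥)
    (hproper : ∃ y, φ y ≠ ⊤)
    (hconv : ∀ x y : EuclideanSpace ℝ (Fin m), ∀ a b : ℝ, 0 ≤ a → 0 ≤ b → a + b = 1 →
      φ (a • x + b • y) ≤ (a : EReal) * φ x + (b : EReal) * φ y)
    (hlsc : LowerSemicontinuous φ)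
    (G : Set (EuclideanSpace ℝ (Fin m) × EuclideanSpace ℝ (Fin m)))
    (hG : G = {p | ∀ v : EuclideanSpace ℝ (Fin m),
        ((inner ℝ p.2 (v - p.1) : ℝ) : EReal) + φ p.1 ≤ φ v}) :
    (∀ p ∈ G, ∀ q ∈ G, (0 : ℝ) ≤ inner ℝ (p.2 - q.2) (p.1 - q.1)) ∧
    (∀ H : Set (EuclideanSpace ℝ (Fin m) × EuclideanSpace ℝ (Fin m)),
      (∀ p ∈ H, ∀ q ∈ H, (0 : ℝ) ≤ inner ℝ (p.2 - q.2) (p.1 - q.1)) → G ⊆ H → H = G) := by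
  change G = {p | IsSubgradient φ p.1 p.2} at hG
  change ERealConvex φ at hconv
  subst hG
  refine ⟨isMonotoneSet_setOf_isSubgradient hbot hproper, fun H hH hGH => ?_⟩
  refine (IsMonotoneSet.subset_of_forall_exists_sub_mem hH hGH fun z => ?_).antisymm hGH
  obtain ⟨y₀, hy₀⟩ := hconv.exists_isMinOn_add_half_sq_norm_sub hbot hproper hlsc z
  exact ⟨y₀, hconv.isSubgradient_sub_of_isMinOn hy₀⟩
end

section
/- Let A ⊆ ℝ × ℝ be a maximal monotone operator on ℝ. Then there exists a proper (ψ ≢ +∞), convex, lower semicontinuous function ψ : ℝ → (−∞, +∞] such that A coincides with the graph of the subdifferential of ψ, i.e., A = { (y, y*) ∈ ℝ × ℝ : y*(v − y) + ψ(y) ≤ ψ(v) for all v ∈ ℝ }. -/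
/-!
Rockafellar's construction. For a set `A` of pairs `(x, x*)` and a base point `p₀ ∈ A`, let
`ψ v` be the supremum, over all chains `p₀, p₁, …, pₙ` in `A`, of
`⟪x₀*, x₁ - x₀⟫ + ⋯ + ⟪xₙ₋₁*, xₙ - xₙ₋₁⟫ + ⟪xₙ*, v - xₙ⟫`.
As a supremum of affine functions `ψ` is convex and lower semicontinuous, and appending a point
`(y, y*) ∈ A` to a chain shows that `y* ∈ ∂ψ(y)`. If `A` is cyclically monotone, that is, every
closed chain has nonpositive sum, then `ψ p₀ ≤ 0`, so `ψ` is proper; the graph of `∂ψ` is then a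
monotone extension of `A`, equal to `A` when `A` is maximal.

On `ℝ` every monotone set is cyclically monotone: rotate a closed chain so that it starts at its
lexicographically greatest point `q`; deleting `q` changes the sum by
`(x_q - x_next) (x*_prev - x*_q) ≤ 0`, and induction on the length finishes the argument.
-/

open scoped RealInnerProductSpace

section Rockafellar

variable {E : Type*} [NormedAddCommGroup E] [InnerProductSpace ℝ E]

noncomputable def chainSum : E × E → List (E × E) → E → ℝ
  | p, [], v => ⟪p.2, v - p.1⟫
  | p, q :: l, v => ⟪p.2, q.1 - p.1⟫ + chainSum q l v

lemma chainSum_append (p q : E × E) (u w : List (E × E)) (v : E) :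
    chainSum p (u ++ q :: w) v = chainSum p u q.1 + chainSum q w v := by
  induction u generalizing p with
  | nil => rfl
  | cons r t ih => simp only [List.cons_append, chainSum, ih r, add_assoc]

lemma chainSum_append_singleton (p q : E × E) (u : List (E × E)) (v : E) :
    chainSum p (u ++ [q]) v = chainSum p u q.1 + ⟪q.2, v - q.1⟫ :=
  chainSum_append p q u [] v

lemma chainSum_eq_add_inner (p : E × E) (l : List (E × E)) (v w : E) :
    chainSum p l v = chainSum p l w + ⟪((p :: l).getLast (List.cons_ne_nil _ _)).2, v - w⟫ := by
  induction l generalizing p with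
  | nil =>
    simp only [chainSum, List.getLast_singleton, ← inner_add_right]
    abel_nf
  | cons q t ih => simp only [chainSum, List.getLast_cons_cons, ih q, add_assoc]

lemma chainSum_rotate (p q : E × E) (u w : List (E × E)) :
    chainSum p (u ++ q :: w) p.1 = chainSum q (w ++ p :: u) q.1 := by
  rw [chainSum_append, chainSum_append, add_comm]

lemma chainSum_affineCombination (p : E × E) (l : List (E × E)) (x y : E) {a b : ℝ}
    (hab : a + b = 1) :
    chainSum p l (a • x + b • y) = a * chainSum p l x + b * chainSum p l y := by
  rw [chainSum_eq_add_inner p l _ 0, chainSum_eq_add_inner p l x 0, chainSum_eq_add_inner p l y 0]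
  simp only [sub_zero, inner_add_right, inner_smul_right]
  linear_combination (-chainSum p l 0) * hab

lemma continuous_chainSum (p : E × E) (l : List (E × E)) : Continuous (chainSum p l) := by
  rw [funext (chainSum_eq_add_inner p l · 0)]
  fun_prop

lemma exists_perm_chainSum_eq {p q : E × E} {l : List (E × E)} (hq : q ∈ p :: l) :
    ∃ l', (q :: l').Perm (p :: l) ∧ chainSum p l p.1 = chainSum q l' q.1 := by
  rcases List.mem_cons.1 hq with rfl | hq
  · exact ⟨l, .refl _, rfl⟩
  · obtain ⟨u, w, rfl⟩ := List.append_of_mem hq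
    exact ⟨w ++ p :: u, List.perm_append_comm (l₁ := q :: w) (l₂ := p :: u),
      chainSum_rotate p q u w⟩

lemma chainSum_cons_self (q h : E × E) (t : List (E × E)) :
    chainSum q (h :: t) q.1 =
      chainSum h t h.1 + ⟪((h :: t).getLast (List.cons_ne_nil _ _)).2 - q.2, q.1 - h.1⟫ := by
  rw [chainSum, chainSum_eq_add_inner h t q.1 h.1, inner_sub_left, ← neg_sub q.1 h.1,
    inner_neg_right]
  ring

def MonotoneSet (A : Set (E × E)) : Prop :=
  ∀ p ∈ A, ∀ q ∈ A, 0 ≤ ⟪p.2 - q.2, p.1 - q.1⟫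

def CyclicallyMonotone (A : Set (E × E)) : Prop :=
  ∀ p l, (∀ r ∈ p :: l, r ∈ A) → chainSum p l p.1 ≤ 0

def subgradientGraph (ψ : E → EReal) : Set (E × E) :=
  {p | ∀ v, ((⟪p.2, v - p.1⟫ : ℝ) : EReal) + ψ p.1 ≤ ψ v}

lemma monotoneSet_subgradientGraph {ψ : E → EReal} (hψ : ∀ v, ψ v ≠ ⊥) (hψ' : ∃ y, ψ y ≠ ⊤) :
    MonotoneSet (subgradientGraph ψ) := by
  obtain ⟨y, hy⟩ := hψ'
  have hfin : ∀ p ∈ subgradientGraph ψ, ψ p.1 ≠ ⊤ := fun p hp htop =>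
    hy (top_le_iff.1 (by simpa [htop] using hp y))
  intro p hp q hq
  have hpq := hp q.1
  have hqp := hq p.1
  rw [← EReal.coe_toReal (hfin p hp) (hψ _), ← EReal.coe_toReal (hfin q hq) (hψ _),
    ← EReal.coe_add, EReal.coe_le_coe_iff] at hpq hqp
  have hsum : ⟪p.2 - q.2, p.1 - q.1⟫ = -(⟪p.2, q.1 - p.1⟫ + ⟪q.2, p.1 - q.1⟫) := by
    simp only [inner_sub_left, inner_sub_right]
    ring
  linarith

noncomputable def rockafellarFunction (A : Set (E × E)) (p₀ : E × E) (v : E) : EReal :=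
  ⨆ l : {l : List (E × E) // ∀ r ∈ l, r ∈ A}, (chainSum p₀ l v : EReal)

variable {A : Set (E × E)} {p₀ : E × E}

lemma chainSum_le_rockafellarFunction {l : List (E × E)} (hl : ∀ r ∈ l, r ∈ A) (v : E) :
    (chainSum p₀ l v : EReal) ≤ rockafellarFunction A p₀ v :=
  le_iSup (fun l : {l : List (E × E) // ∀ r ∈ l, r ∈ A} => (chainSum p₀ l v : EReal)) ⟨l, hl⟩

lemma rockafellarFunction_ne_bot (v : E) : rockafellarFunction A p₀ v ≠ ⊥ :=
  ne_bot_of_le_ne_bot (EReal.coe_ne_bot _)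
    (chainSum_le_rockafellarFunction (l := []) (by simp) v)

lemma rockafellarFunction_self_nonpos (hA : CyclicallyMonotone A) (hp₀ : p₀ ∈ A) :
    rockafellarFunction A p₀ p₀.1 ≤ 0 :=
  iSup_le fun l => EReal.coe_nonpos.2 (hA p₀ l.1 (List.forall_mem_cons.2 ⟨hp₀, l.2⟩))

lemma rockafellarFunction_convex (x y : E) {a b : ℝ} (ha : 0 ≤ a) (hb : 0 ≤ b)
    (hab : a + b = 1) :
    rockafellarFunction A p₀ (a • x + b • y) ≤
      (a : EReal) * rockafellarFunction A p₀ x + (b : EReal) * rockafellarFunction A p₀ y := by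
  refine iSup_le fun l => ?_
  rw [chainSum_affineCombination p₀ l.1 x y hab, EReal.coe_add, EReal.coe_mul, EReal.coe_mul]
  gcongr
  · exact chainSum_le_rockafellarFunction l.2 x
  · exact chainSum_le_rockafellarFunction l.2 y

lemma lowerSemicontinuous_rockafellarFunction :
    LowerSemicontinuous (rockafellarFunction A p₀) :=
  lowerSemicontinuous_iSup fun l =>
    (continuous_coe_real_ereal.comp (continuous_chainSum p₀ l.1)).lowerSemicontinuous

lemma subset_subgradientGraph_rockafellarFunction :
    A ⊆ subgradientGraph (rockafellarFunction A p₀) := by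
  intro p hp v
  rw [add_comm, ← EReal.le_sub_iff_add_le (.inl (EReal.coe_ne_bot _)) (.inl (EReal.coe_ne_top _))]
  refine iSup_le fun l => ?_
  rw [EReal.le_sub_iff_add_le (.inl (EReal.coe_ne_bot _)) (.inl (EReal.coe_ne_top _)),
    ← EReal.coe_add, ← chainSum_append_singleton]
  exact chainSum_le_rockafellarFunction (fun r hr => (List.mem_append.1 hr).elim (l.2 r)
    fun hr => List.mem_singleton.1 hr ▸ hp) v

end Rockafellar

lemma monotoneSet_iff_real {A : Set (ℝ × ℝ)} :
    MonotoneSet A ↔ ∀ p ∈ A, ∀ q ∈ A, 0 ≤ (p.2 - q.2) * (p.1 - q.1) := by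
  refine forall₂_congr fun p _ => forall₂_congr fun q _ => ?_
  rw [mul_comm]
  -- on `ℝ`, `⟪x, y⟫` unfolds to `y * x`
  rfl

lemma MonotoneSet.snd_le_of_toLex_le {A : Set (ℝ × ℝ)} (hA : MonotoneSet A) {p q : ℝ × ℝ}
    (hp : p ∈ A) (hq : q ∈ A) (h : toLex p ≤ toLex q) : p.2 ≤ q.2 := by
  rcases Prod.Lex.le_iff.1 h with h | ⟨-, h⟩
  · exact sub_nonneg.1 <| (mul_nonneg_iff_of_pos_left (sub_pos.2 h)).1 (hA q hq p hp)
  · exact h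

theorem MonotoneSet.cyclicallyMonotone {A : Set (ℝ × ℝ)} (hA : MonotoneSet A) :
    CyclicallyMonotone A := by
  classical
  intro p l hl
  obtain ⟨n, hn⟩ : ∃ n, l.length = n := ⟨_, rfl⟩
  induction n generalizing p l with
  | zero => simp [List.length_eq_zero_iff.1 hn, chainSum]
  | succ n ih =>
    obtain ⟨q, hq, hq_max⟩ := (p :: l).toFinset.exists_max_image toLex ⟨p, by simp⟩
    obtain ⟨_ | ⟨h, t⟩, hperm, hrot⟩ := exists_perm_chainSum_eq (List.mem_toFinset.1 hq)
    all_goals have hlen := hperm.length_eq; simp only [List.length_cons, List.length_nil] at hlen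
    · omega
    have hmem : ∀ r ∈ q :: h :: t, r ∈ A := fun r hr => hl r (hperm.mem_iff.1 hr)
    have hmax : ∀ r ∈ q :: h :: t, toLex r ≤ toLex q := fun r hr =>
      hq_max r (List.mem_toFinset.2 (hperm.mem_iff.1 hr))
    have hlast := List.mem_cons_of_mem q (List.getLast_mem (List.cons_ne_nil h t))
    rw [hrot, chainSum_cons_self]
    refine add_nonpos (ih h t (fun r hr => hmem r (.tail _ hr)) ?_) ?_
    · omega
    · exact mul_nonpos_of_nonneg_of_nonpos
        (sub_nonneg.2 (Prod.Lex.monotone_fst _ _ (hmax h (by simp))))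
        (sub_nonpos.2 (hA.snd_le_of_toLex_le (hmem _ hlast) (hmem q (by simp)) (hmax _ hlast)))

/-- Every maximal monotone operator `A ⊆ ℝ × ℝ` is the graph of the
subdifferential of some proper, convex, lower semicontinuous function
`ψ : ℝ → (−∞,+∞]`. -/
theorem stmt_13 (A : Set (ℝ × ℝ))
    (hmono : ∀ p ∈ A, ∀ q ∈ A, (0 : ℝ) ≤ (p.2 - q.2) * (p.1 - q.1))
    (hmax : ∀ H : Set (ℝ × ℝ),
      (∀ p ∈ H, ∀ q ∈ H, (0 : ℝ) ≤ (p.2 - q.2) * (p.1 - q.1)) → A ⊆ H → H = A) :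
    ∃ ψ : ℝ → EReal,
      (∀ y, ψ y ≠ ⊥) ∧
      (∃ y, ψ y ≠ ⊤) ∧
      (∀ x y : ℝ, ∀ a b : ℝ, 0 ≤ a → 0 ≤ b → a + b = 1 →
        ψ (a * x + b * y) ≤ (a : EReal) * ψ x + (b : EReal) * ψ y) ∧
      LowerSemicontinuous ψ ∧
      A = {p : ℝ × ℝ | ∀ v : ℝ, ((p.2 * (v - p.1) : ℝ) : EReal) + ψ p.1 ≤ ψ v} := by
  obtain ⟨p₀, hp₀⟩ : A.Nonempty := by
    rw [Set.nonempty_iff_ne_empty]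
    rintro rfl
    simpa using hmax {0} (by simp) (Set.empty_subset _)
  have hA : MonotoneSet A := monotoneSet_iff_real.2 hmono
  have hψ_proper : ∃ y, rockafellarFunction A p₀ y ≠ ⊤ :=
    ⟨p₀.1, ne_top_of_le_ne_top EReal.zero_ne_top
      (rockafellarFunction_self_nonpos hA.cyclicallyMonotone hp₀)⟩
  have hgraph := hmax _
    (monotoneSet_iff_real.1 (monotoneSet_subgradientGraph rockafellarFunction_ne_bot hψ_proper))
    subset_subgradientGraph_rockafellarFunction
  refine ⟨rockafellarFunction A p₀, rockafellarFunction_ne_bot, hψ_proper,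
    fun x y a b ha hb hab => rockafellarFunction_convex x y ha hb hab,
    lowerSemicontinuous_rockafellarFunction, ?_⟩
  refine hgraph.symm.trans (Set.ext fun p => forall_congr' fun v => ?_)
  rw [mul_comm]
  rfl
end
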